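/- The incidence structure with point set {r_i, y_i, g_i, m_i, b_i, c_i, p_i : i ∈ Z_3} and line set {R_i, Y_i, G_i, M_i, B_i, C_i, P_i : i ∈ Z_3} given by the incidence table of B(21_4) is a combinatorial (21_4) configuration: it has 21 points, 21 lines, every point is incident with exactly 4 lines, every line is incident with exactly 4 points, and any two distinct points are incident with at most one common line. -/

import Mathlib

/-- The seven symmetry classes of points (r,y,g,m,b,c,p) / lines (R,Y,G,M,B,C,P). -/
inductive Cls | R | Y | G | M | B | C | P
deriving DecidableEq

instance : Fintype Cls where
  elems := {Cls.R, Cls.Y, Cls.G, Cls.M, Cls.B, Cls.C, Cls.P}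
  complete := by intro x; cases x <;> simp

/-- Labels: a class together with an index in ℤ/3. Used both for points and lines. -/
abbrev Lbl := Cls × ZMod 3

/-- The incidence relation of B(21₄), from its incidence table:
point r_i lies on lines M_i, M_{i+1}, G_{i+1}, P_i; y_i on M_{i+2}, B_{i+1}, C_i, P_i;
g_i on B_i, C_{i+1}, R_{i+1}, P_i; m_i on Y_{i+2}, R_i, R_{i+1}, P_{i+1};
b_i on C_i, C_{i+2}, Y_{i+1}, G_i; c_i on B_i, B_{i+2}, G_{i+1}, Y_i;
p_i on R_i, Y_i, G_i, M_{i+1} (indices mod 3). First argument: point; second: line. -/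
def inc : Lbl → Lbl → Bool
  | (Cls.R, i), (Cls.M, j) => decide (j = i) || decide (j = i + 1)
  | (Cls.R, i), (Cls.G, j) => decide (j = i + 1)
  | (Cls.R, i), (Cls.P, j) => decide (j = i)
  | (Cls.Y, i), (Cls.M, j) => decide (j = i + 2)
  | (Cls.Y, i), (Cls.B, j) => decide (j = i + 1)
  | (Cls.Y, i), (Cls.C, j) => decide (j = i)
  | (Cls.Y, i), (Cls.P, j) => decide (j = i)
  | (Cls.G, i), (Cls.B, j) => decide (j = i)
  | (Cls.G, i), (Cls.C, j) => decide (j = i + 1)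
  | (Cls.G, i), (Cls.R, j) => decide (j = i + 1)
  | (Cls.G, i), (Cls.P, j) => decide (j = i)
  | (Cls.M, i), (Cls.Y, j) => decide (j = i + 2)
  | (Cls.M, i), (Cls.R, j) => decide (j = i) || decide (j = i + 1)
  | (Cls.M, i), (Cls.P, j) => decide (j = i + 1)
  | (Cls.B, i), (Cls.C, j) => decide (j = i) || decide (j = i + 2)
  | (Cls.B, i), (Cls.Y, j) => decide (j = i + 1)
  | (Cls.B, i), (Cls.G, j) => decide (j = i)
  | (Cls.C, i), (Cls.B, j) => decide (j = i) || decide (j = i + 2)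
  | (Cls.C, i), (Cls.G, j) => decide (j = i + 1)
  | (Cls.C, i), (Cls.Y, j) => decide (j = i)
  | (Cls.P, i), (Cls.R, j) => decide (j = i)
  | (Cls.P, i), (Cls.Y, j) => decide (j = i)
  | (Cls.P, i), (Cls.G, j) => decide (j = i)
  | (Cls.P, i), (Cls.M, j) => decide (j = i + 1)
  | _, _ => false

theorem card_lbl : Fintype.card Lbl = 21 := by
  decide

theorem card_lines_through (p : Lbl) :
    (Finset.univ.filter (fun l : Lbl => inc p l = true)).card = 4 := by
  revert p
  decide

theorem card_points_on (l : Lbl) :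
    (Finset.univ.filter (fun p : Lbl => inc p l = true)).card = 4 := by
  revert l
  decide

theorem card_common_lines_le_one {p q : Lbl} (hpq : p ≠ q) :
    (Finset.univ.filter (fun l : Lbl => inc p l = true ∧ inc q l = true)).card ≤ 1 := by
  revert p q
  decide

/-- the incidence structure of B(21₄) is a combinatorial (21₄)
configuration: 21 points, 21 lines, every point on exactly 4 lines, every line
through exactly 4 points, and any two distinct points on at most one common line. -/
theorem B21_is_21_4_configuration :
    Fintype.card Lbl = 21 ∧ Fintype.card Lbl = 21 ∧
    (∀ p : Lbl, (Finset.univ.filter (fun l : Lbl => inc p l = true)).card = 4) ∧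
    (∀ l : Lbl, (Finset.univ.filter (fun p : Lbl => inc p l = true)).card = 4) ∧
    (∀ p q : Lbl, p ≠ q →
      (Finset.univ.filter (fun l : Lbl => inc p l = true ∧ inc q l = true)).card ≤ 1) :=
  ⟨card_lbl, card_lbl, card_lines_through, card_points_on, fun _ _ => card_common_lines_le_one⟩
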